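/- For any skip-free GKAT expression e, the set of expressions reachable from e under the small-step transition relation is finite. -/
import Mathlib


variable {At : Type} {Act : Type} {X : Type} {Y : Type} {Z : Type}

/-- Skip-free GKAT expressions; tests are represented as Boolean predicates on atoms. -/
inductive GExp (At Act : Type) : Type
  | zero : GExp At Act
  | act : Act → GExp At Act
  | add : (At → Bool) → GExp At Act → GExp At Act → GExp At Act
  | seq : GExp At Act → GExp At Act → GExp At Act
  | loop : (At → Bool) → GExp At Act → GExp At Act → GExp At Act

/-- The Brzozowski-style small-step semantics (derivative) of skip-free GKAT expressions.
`none` is the failure output ⊥, `some (p, none)` is acceptance with action `p`,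
and `some (p, some e')` is a transition to `e'` with action `p`. -/
def gderiv : GExp At Act → At → Option (Act × Option (GExp At Act))
  | .zero, _ => none
  | .act p, _ => some (p, none)
  | .add b e f, α => if b α then gderiv e α else gderiv f α
  | .seq e f, α =>
      match gderiv e α with
      | none => none
      | some (p, none) => some (p, some f)
      | some (p, some e') => some (p, some (.seq e' f))
  | .loop b e f, α =>
      if b α then
        match gderiv e α with
        | none => none
        | some (p, none) => some (p, some (.loop b e f))
        | some (p, some e') => some (p, some (.seq e' (.loop b e f)))
      else gderiv f α

/-- Closure: a superset of all expressions reachable in one or more steps. -/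
def gcl : GExp At Act → Set (GExp At Act)
  | .zero => ∅
  | .act _ => ∅
  | .add _ e f => gcl e ∪ gcl f
  | .seq e f => (fun e' => GExp.seq e' f) '' gcl e ∪ {f} ∪ gcl f
  | .loop b e f =>
      (fun e' => GExp.seq e' (GExp.loop b e f)) '' gcl e ∪ {GExp.loop b e f} ∪ gcl f

lemma gcl_finite : ∀ e : GExp At Act, (gcl e).Finite
  | .zero => Set.finite_empty
  | .act _ => Set.finite_empty
  | .add _ e f => ((gcl_finite e).union (gcl_finite f))
  | .seq e f =>
      (((gcl_finite e).image _).union (Set.finite_singleton _)).union (gcl_finite f)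
  | .loop b e f =>
      (((gcl_finite e).image _).union (Set.finite_singleton _)).union (gcl_finite f)

lemma deriv_mem_gcl : ∀ {e e' : GExp At Act} {α : At} {p : Act},
    gderiv e α = some (p, some e') → e' ∈ gcl e := by
  intro e
  induction e with
  | zero => intro e' α p h; simp [gderiv] at h
  | act q => intro e' α p h; simp [gderiv] at h
  | add b e f ihe ihf =>
      intro e' α p h
      simp only [gderiv] at h
      by_cases hb : b α
      · simp [hb] at h; exact Or.inl (ihe h)
      · simp [hb] at h; exact Or.inr (ihf h)
  | seq e f ihe ihf =>
      intro e' α p h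
      simp only [gderiv] at h
      rcases he : gderiv e α with _ | ⟨q, _ | g⟩ <;> rw [he] at h <;>
        simp_all [gcl]
      · exact Or.inl (Or.inr ⟨g, ihe he, h.2⟩)
  | loop b e f ihe ihf =>
      intro e' α p h
      simp only [gderiv] at h
      by_cases hb : b α
      · simp only [hb, if_true] at h
        rcases he : gderiv e α with _ | ⟨q, _ | g⟩ <;> rw [he] at h <;>
          simp_all [gcl]
        exact Or.inl (Or.inr ⟨g, ihe he, h.2⟩)
      · simp only [hb, if_false] at h
        exact Or.inr (ihf h)

lemma gcl_trans : ∀ {e x : GExp At Act}, x ∈ gcl e → gcl x ⊆ gcl e := by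
  intro e
  induction e with
  | zero => intro x hx; simp [gcl] at hx
  | act q => intro x hx; simp [gcl] at hx
  | add b e f ihe ihf =>
      intro x hx
      rcases hx with hx | hx
      · exact (ihe hx).trans Set.subset_union_left
      · exact (ihf hx).trans Set.subset_union_right
  | seq e f ihe ihf =>
      intro x hx
      rcases hx with (⟨g, hg, rfl⟩ | rfl) | hx
      · intro y hy
        rcases hy with (⟨g', hg', rfl⟩ | rfl) | hy
        · exact Or.inl (Or.inl ⟨g', ihe hg hg', rfl⟩)
        · exact Or.inl (Or.inr rfl)
        · exact Or.inr hy
      · exact Set.subset_union_right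
      · exact (ihf hx).trans Set.subset_union_right
  | loop b e f ihe ihf =>
      intro x hx
      rcases hx with (⟨g, hg, rfl⟩ | rfl) | hx
      · intro y hy
        rcases hy with (⟨g', hg', rfl⟩ | rfl) | hy
        · exact Or.inl (Or.inl ⟨g', ihe hg hg', rfl⟩)
        · exact Or.inl (Or.inr rfl)
        · -- y ∈ gcl (loop b e f), goal: y ∈ gcl (loop b e f)
          exact hy
      · exact Set.Subset.refl _
      · exact (ihf hx).trans Set.subset_union_right

/-- For any skip-free GKAT expression `e`, the set of expressions reachable
from `e` under the small-step transition relation is finite. -/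
theorem reachable_finite [Fintype At] [Fintype Act] (e : GExp At Act) :
    Set.Finite {e' : GExp At Act |
      Relation.ReflTransGen
        (fun x y => ∃ (α : At) (p : Act), gderiv x α = some (p, some y)) e e'} := by
  apply Set.Finite.subset ((gcl_finite e).insert e)
  intro y hy
  simp only [Set.mem_setOf_eq] at hy
  induction hy with
  | refl => exact Set.mem_insert _ _
  | tail _ hbc ih =>
      rcases hbc with ⟨α, p, hd⟩
      rcases ih with rfl | hb
      · exact Set.mem_insert_of_mem _ (deriv_mem_gcl hd)
      · exact Set.mem_insert_of_mem _ (gcl_trans hb (deriv_mem_gcl hd))
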